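/- For every p of the form p = 2ᵏ with k ≥ 0, the relations [[aᵖ, bᵖ], bᵖ] = 1 and [[bᵖ, a²ᵖ], a²ᵖ] = 1 hold in G. -/

import Mathlib

-- The generators `a` and `b` of the iterated monodromy group of `z^2-1`,
-- as functions on binary words (`false` = x = left, `true` = y = right),
-- defined by mutual recursion.
mutual
def aFun : List Bool → List Bool
  | [] => []
  | false :: w => true :: bFun w
  | true :: w => false :: w

def bFun : List Bool → List Bool
  | [] => []
  | false :: w => false :: aFun w
  | true :: w => true :: w
end

-- The inverses of `aFun`/`bFun`.
mutual
def aInv : List Bool → List Bool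
  | [] => []
  | true :: w => false :: bInv w
  | false :: w => true :: w

def bInv : List Bool → List Bool
  | [] => []
  | false :: w => false :: aInv w
  | true :: w => true :: w
end

mutual
theorem aFun_aInv : ∀ w, aFun (aInv w) = w
  | [] => rfl
  | true :: w => by simp [aInv, aFun, bFun_bInv w]
  | false :: w => by simp [aInv, aFun]

theorem bFun_bInv : ∀ w, bFun (bInv w) = w
  | [] => rfl
  | false :: w => by simp [bInv, bFun, aFun_aInv w]
  | true :: w => by simp [bInv, bFun]
end

mutual
theorem aInv_aFun : ∀ w, aInv (aFun w) = w
  | [] => rfl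
  | false :: w => by simp [aFun, aInv, bInv_bFun w]
  | true :: w => by simp [aFun, aInv]

theorem bInv_bFun : ∀ w, bInv (bFun w) = w
  | [] => rfl
  | false :: w => by simp [bFun, bInv, aInv_aFun w]
  | true :: w => by simp [bFun, bInv]
end

/-- `a` as a permutation of the set of binary words. -/
def aPerm : Equiv.Perm (List Bool) := ⟨aFun, aInv, aInv_aFun, aFun_aInv⟩
/-- `b` as a permutation of the set of binary words. -/
def bPerm : Equiv.Perm (List Bool) := ⟨bFun, bInv, bInv_bFun, bFun_bInv⟩

mutual
theorem aFun_length : ∀ w, (aFun w).length = w.length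
  | [] => rfl
  | false :: w => by simp [aFun, bFun_length w]
  | true :: w => by simp [aFun]

theorem bFun_length : ∀ w, (bFun w).length = w.length
  | [] => rfl
  | false :: w => by simp [bFun, aFun_length w]
  | true :: w => by simp [bFun]
end

mutual
theorem aFun_prefix : ∀ u v, u <+: v → aFun u <+: aFun v
  | [], v, _ => by simp [aFun]
  | false :: u, false :: v, h => by
      simp only [List.cons_prefix_cons] at h
      simpa [aFun, List.cons_prefix_cons] using bFun_prefix u v h.2
  | true :: u, true :: v, h => by
      simp only [List.cons_prefix_cons] at h
      simpa [aFun, List.cons_prefix_cons] using h.2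
  | false :: u, true :: v, h => by simp [List.cons_prefix_cons] at h
  | true :: u, false :: v, h => by simp [List.cons_prefix_cons] at h
  | _ :: u, [], h => by simp at h

theorem bFun_prefix : ∀ u v, u <+: v → bFun u <+: bFun v
  | [], v, _ => by simp [bFun]
  | false :: u, false :: v, h => by
      simp only [List.cons_prefix_cons] at h
      simpa [bFun, List.cons_prefix_cons] using aFun_prefix u v h.2
  | true :: u, true :: v, h => by
      simp only [List.cons_prefix_cons] at h
      simpa [bFun, List.cons_prefix_cons] using h.2
  | false :: u, true :: v, h => by simp [List.cons_prefix_cons] at h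
  | true :: u, false :: v, h => by simp [List.cons_prefix_cons] at h
  | _ :: u, [], h => by simp at h
end

/-- The group of automorphisms of the binary rooted tree: bijections of the set of
binary words preserving word length and the prefix relation. -/
def treeAut : Subgroup (Equiv.Perm (List Bool)) where
  carrier := {f | (∀ w, (f w).length = w.length) ∧ ∀ u v : List Bool, u <+: v → f u <+: f v}
  one_mem' := ⟨fun _ => rfl, fun _ _ h => h⟩
  mul_mem' := by
    rintro f g ⟨hf1, hf2⟩ ⟨hg1, hg2⟩
    exact ⟨fun w => (hf1 _).trans (hg1 w), fun u v h => hf2 _ _ (hg2 _ _ h)⟩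
  inv_mem' := by
    rintro f ⟨hf1, hf2⟩
    constructor
    · intro w
      have := hf1 (f⁻¹ w)
      simpa using this.symm
    · intro u v h
      have hlen : (f⁻¹ u).length ≤ (f⁻¹ v).length := by
        have h1 : (f⁻¹ u).length = u.length := by have := hf1 (f⁻¹ u); simpa using this.symm
        have h2 : (f⁻¹ v).length = v.length := by have := hf1 (f⁻¹ v); simpa using this.symm
        rw [h1, h2]; exact h.length_le
      set p := (f⁻¹ v).take (f⁻¹ u).length with hp
      have hpv : p <+: f⁻¹ v := List.take_prefix _ _
      have hplen : p.length = (f⁻¹ u).length := by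
        rw [hp, List.length_take]; exact Nat.min_eq_left hlen
      have hfp : f p <+: v := by
        have := hf2 _ _ hpv
        simpa using this
      have hfplen : (f p).length = u.length := by
        rw [hf1 p, hplen]
        have := hf1 (f⁻¹ u); simpa using this.symm
      have : f p = u := by
        rcases List.prefix_or_prefix_of_prefix hfp h with h' | h'
        · exact h'.eq_of_length hfplen
        · exact (h'.eq_of_length hfplen.symm).symm
      have : p = f⁻¹ u := by
        have := congrArg (f⁻¹ : Equiv.Perm (List Bool)) this
        simpa using this
      rw [← this]; exact hpv

/-- The generator `a` as a tree automorphism. -/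
def A : treeAut := ⟨aPerm, aFun_length, aFun_prefix⟩
/-- The generator `b` as a tree automorphism. -/
def B : treeAut := ⟨bPerm, bFun_length, bFun_prefix⟩

/-- The iterated monodromy group of `z ↦ z² - 1`: the subgroup of the automorphism
group of the binary rooted tree generated by `a` and `b`. -/
def G : Subgroup treeAut := Subgroup.closure {A, B}

/-- Apply a tree automorphism to a binary word. -/
def app (g : treeAut) (w : List Bool) : List Bool := g.val w

/-- The commutator `[g,h] = g⁻¹h⁻¹gh`. -/
def pcomm {H : Type*} [Group H] (g h : H) : H := g⁻¹ * h⁻¹ * g * h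

/-- `g` acts on cons-words as the pair `(g0, g1)` (no swap). -/
def onCons (g g0 g1 : treeAut) : Prop :=
  ∀ w, app g (false :: w) = false :: app g0 w ∧ app g (true :: w) = true :: app g1 w

lemma app_mul (g h : treeAut) (w : List Bool) : app (g * h) w = app g (app h w) := rfl

lemma app_injective (g : treeAut) : Function.Injective (app g) :=
  (g.val : Equiv.Perm (List Bool)).injective

lemma app_inv_app (g : treeAut) (w : List Bool) : app g⁻¹ (app g w) = w :=
  (g.val : Equiv.Perm (List Bool)).symm_apply_apply w

lemma app_app_inv (g : treeAut) (w : List Bool) : app g (app g⁻¹ w) = w :=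
  (g.val : Equiv.Perm (List Bool)).apply_symm_apply w

lemma onCons_one : onCons 1 1 1 := fun _ => ⟨rfl, rfl⟩

lemma onCons_mul {g g0 g1 h h0 h1 : treeAut} (hg : onCons g g0 g1) (hh : onCons h h0 h1) :
    onCons (g * h) (g0 * h0) (g1 * h1) := by
  intro w
  constructor
  · rw [app_mul, (hh w).1, (hg _).1, app_mul]
  · rw [app_mul, (hh w).2, (hg _).2, app_mul]

lemma onCons_inv {g g0 g1 : treeAut} (hg : onCons g g0 g1) : onCons g⁻¹ g0⁻¹ g1⁻¹ := by
  intro w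
  constructor
  · have : app g (false :: app g0⁻¹ w) = false :: w := by
      rw [(hg _).1, app_app_inv]
    calc app g⁻¹ (false :: w) = app g⁻¹ (app g (false :: app g0⁻¹ w)) := by rw [this]
      _ = false :: app g0⁻¹ w := app_inv_app _ _
  · have : app g (true :: app g1⁻¹ w) = true :: w := by
      rw [(hg _).2, app_app_inv]
    calc app g⁻¹ (true :: w) = app g⁻¹ (app g (true :: app g1⁻¹ w)) := by rw [this]
      _ = true :: app g1⁻¹ w := app_inv_app _ _

lemma onCons_pow {g g0 g1 : treeAut} (hg : onCons g g0 g1) (n : ℕ) :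
    onCons (g ^ n) (g0 ^ n) (g1 ^ n) := by
  induction n with
  | zero => simpa using onCons_one
  | succ n ih => simpa [pow_succ] using onCons_mul ih hg

lemma onCons_pcomm {g g0 g1 h h0 h1 : treeAut} (hg : onCons g g0 g1) (hh : onCons h h0 h1) :
    onCons (pcomm g h) (pcomm g0 h0) (pcomm g1 h1) := by
  unfold pcomm
  exact onCons_mul (onCons_mul (onCons_mul (onCons_inv hg) (onCons_inv hh)) hg) hh

lemma app_nil (g : treeAut) : app g [] = [] := by
  have := g.2.1 []
  exact List.eq_nil_of_length_eq_zero this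

lemma eq_one_of_onCons {g : treeAut} (hg : onCons g 1 1) : g = 1 := by
  have h : ∀ w, app g w = w := by
    intro w
    cases w with
    | nil => exact app_nil g
    | cons b w =>
      cases b
      · exact (hg w).1
      · exact (hg w).2
  apply Subtype.ext
  exact Equiv.ext h

lemma pcomm_one_left {H : Type*} [Group H] (h : H) : pcomm 1 h = 1 := by
  simp [pcomm]

lemma pcomm_one_right {H : Type*} [Group H] (h : H) : pcomm h 1 = 1 := by
  simp [pcomm]

lemma pcomm_self {H : Type*} [Group H] (h : H) : pcomm h h = 1 := by
  simp [pcomm, mul_assoc]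

-- base self-similarity facts
lemma hB : onCons B A 1 := fun w => ⟨rfl, rfl⟩

lemma A_sq : A ^ 2 = A * A := sq A

lemma hA2 : onCons (A ^ 2) B B := by
  rw [A_sq]
  intro w
  exact ⟨rfl, rfl⟩

lemma hC : onCons (pcomm A B) A A⁻¹ := by
  intro w
  constructor
  · show aInv (bInv (aFun (bFun (false :: w)))) = false :: aFun w
    simp [aFun, bFun, aInv, bInv, bInv_bFun]
  · show aInv (bInv (aFun (bFun (true :: w)))) = true :: aInv w
    simp [aFun, bFun, aInv, bInv]

lemma hBpow : ∀ k : ℕ, onCons (B ^ 2 ^ k) (A ^ 2 ^ k) 1 := by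
  intro k
  induction k with
  | zero => simpa using hB
  | succ k ih =>
    have := onCons_pow ih 2
    rw [← pow_mul, ← pow_mul, ← pow_succ] at this
    simpa using this

lemma hApow2 (k : ℕ) : onCons (A ^ (2 * 2 ^ k)) (B ^ 2 ^ k) (B ^ 2 ^ k) := by
  have := onCons_pow hA2 (2 ^ k)
  rwa [← pow_mul] at this

/-- for every `p = 2ᵏ`, the relations `[[aᵖ,bᵖ],bᵖ] = 1` and
`[[bᵖ,a²ᵖ],a²ᵖ] = 1` hold in `G`. -/
theorem relations_hold (k : ℕ) :
    pcomm (pcomm (A ^ 2 ^ k) (B ^ 2 ^ k)) (B ^ 2 ^ k) = 1 ∧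
    pcomm (pcomm (B ^ 2 ^ k) (A ^ (2 * 2 ^ k))) (A ^ (2 * 2 ^ k)) = 1 := by
  have R2fromR1 : ∀ k : ℕ, pcomm (pcomm (A ^ 2 ^ k) (B ^ 2 ^ k)) (B ^ 2 ^ k) = 1 →
      pcomm (pcomm (B ^ 2 ^ k) (A ^ (2 * 2 ^ k))) (A ^ (2 * 2 ^ k)) = 1 := by
    intro k h1
    apply eq_one_of_onCons
    have h := onCons_pcomm (onCons_pcomm (hBpow k) (hApow2 k)) (hApow2 k)
    rwa [h1, pcomm_one_left, pcomm_one_left] at h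
  induction k with
  | zero =>
    have R1 : pcomm (pcomm (A ^ 2 ^ 0) (B ^ 2 ^ 0)) (B ^ 2 ^ 0) = 1 := by
      simp only [pow_zero, pow_one]
      apply eq_one_of_onCons
      have h := onCons_pcomm hC hB
      rwa [pcomm_self, pcomm_one_right] at h
    exact ⟨R1, R2fromR1 0 R1⟩
  | succ k ih =>
    have R1 : pcomm (pcomm (A ^ 2 ^ (k + 1)) (B ^ 2 ^ (k + 1))) (B ^ 2 ^ (k + 1)) = 1 := by
      have hp : (2 : ℕ) ^ (k + 1) = 2 * 2 ^ k := by ring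
      rw [hp]
      apply eq_one_of_onCons
      have hBp : onCons (B ^ (2 * 2 ^ k)) (A ^ (2 * 2 ^ k)) 1 := by
        have := hBpow (k + 1); rwa [hp] at this
      have h := onCons_pcomm (onCons_pcomm (hApow2 k) hBp) hBp
      rwa [ih.2, pcomm_one_right] at h
    exact ⟨R1, R2fromR1 (k + 1) R1⟩
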